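/- Deleting a letter from a cyclic word over the alphabet {0, 1} does not increase the number of cyclic positions i at which w(i) = 0 and w(i+1) = 1 (indices mod length). -/

import Mathlib

/-!
Each transition of the shortened word lifts to a transition of `w`. A transition `(i, i + 1)`
of `w ∘ j.succAbove` whose two letters stay adjacent in `w` lifts to itself. Otherwise the
deleted letter `j` sat between them, so `w` reads `0, w j, 1` there, and the transition lifts
to `j` if `w j = 0` and to the position before `j` if `w j = 1`. This lift is injective.
-/

/-- The transition count of a cyclic word `w : Fin n → Fin 2`: the number of
cyclic positions `i` with `w i = 0` and `w (i+1) = 1` (addition in `Fin n` is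
cyclic, i.e. indices mod the length). -/
def transitionCount {n : ℕ} [NeZero n] (w : Fin n → Fin 2) : ℕ :=
  (Finset.univ.filter fun i : Fin n => w i = 0 ∧ w (i + 1) = 1).card

theorem Fin.succAbove_add_one_eq_or {n : ℕ} (j : Fin (n + 2)) (i : Fin (n + 1)) :
    j.succAbove (i + 1) = j.succAbove i + 1 ∨
      j.succAbove i + 1 = j ∧ j.succAbove (i + 1) = j + 1 := by
  simp only [Fin.ext_iff, Fin.val_add_one, Fin.succAbove, Fin.lt_def, apply_ite Fin.val,
    Fin.val_castSucc, Fin.val_succ, Fin.val_last]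
  have := i.isLt
  have := j.isLt
  split_ifs <;> omega

section TransitionLift

variable {n : ℕ} (w : Fin (n + 2) → Fin 2) (j : Fin (n + 2))

def transitionLift (i : Fin (n + 1)) : Fin (n + 2) :=
  if w j = 0 ∧ j.succAbove i + 1 = j then j else j.succAbove i

theorem transitionLift_injective : Function.Injective (transitionLift w j) := by
  intro a b hab
  unfold transitionLift at hab
  split_ifs at hab with ha hb hb
  · exact Fin.succAbove_right_injective (add_right_cancel (ha.2.trans hb.2.symm))
  · exact absurd hab.symm (Fin.succAbove_ne j b)
  · exact absurd hab (Fin.succAbove_ne j a)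
  · exact Fin.succAbove_right_injective hab

variable {w j}

theorem transitionLift_isTransition {i : Fin (n + 1)} (h0 : w (j.succAbove i) = 0)
    (h1 : w (j.succAbove (i + 1)) = 1) :
    w (transitionLift w j i) = 0 ∧ w (transitionLift w j i + 1) = 1 := by
  unfold transitionLift
  rcases Fin.succAbove_add_one_eq_or j i with hadj | ⟨hj, hnext⟩
  · have hcond : ¬(w j = 0 ∧ j.succAbove i + 1 = j) :=
      fun h => Fin.succAbove_ne j (i + 1) (hadj.trans h.2)
    rw [if_neg hcond]
    exact ⟨h0, hadj ▸ h1⟩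
  · by_cases hwj : w j = 0
    · rw [if_pos ⟨hwj, hj⟩]
      exact ⟨hwj, hnext ▸ h1⟩
    · rw [if_neg (fun h => hwj h.1), hj]
      exact ⟨h0, Fin.eq_one_of_ne_zero _ hwj⟩

end TransitionLift

/-- Deleting one letter (at position `j`, the remaining letters indexed in
cyclic order via `Fin.succAbove j`) from a cyclic word over `{0, 1}` of length
`n + 2` does not increase the number of cyclic `0`-to-`1` transitions. -/
theorem stmt12 (n : ℕ) (w : Fin (n + 2) → Fin 2) (j : Fin (n + 2)) :
    transitionCount (w ∘ j.succAbove) ≤ transitionCount w := by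
  refine Finset.card_le_card_of_injOn (transitionLift w j) (fun i hi => ?_)
    (transitionLift_injective w j).injOn
  simp only [Finset.mem_coe, Finset.mem_filter, Finset.mem_univ, true_and,
    Function.comp_apply] at hi ⊢
  exact transitionLift_isTransition hi.1 hi.2
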